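/- Let A ~ χ²_{a} and B ~ χ²_{b} be independent chi-square random variables with a = m - 1 and b = n - m + 1 degrees of freedom for integers 1 < m < n - 1. Then the random variable D = (1 + A/B)·(n - m + 1)/n satisfies, for every t ≥ 0, P(D > e^t) ≤ exp(-((n - m + 1)/2)·t²/(t + 1 + (m-1)/n)). -/

import Mathlib

open MeasureTheory ProbabilityTheory Real

lemma gammaPDFReal_mul_exp {p r c : ℝ} (hr : 0 < r) (hc : c < r) (x : ℝ) :
    gammaPDFReal p r x * exp (c * x) = (r / (r - c)) ^ p * gammaPDFReal p (r - c) x := by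
  have hrc : 0 < r - c := by linarith
  unfold gammaPDFReal
  split_ifs with h
  · rw [div_rpow hr.le hrc.le]
    have : exp (-(r * x)) * exp (c * x) = exp (-((r - c) * x)) := by
      rw [← exp_add]; ring_nf
    have hΓ : r ^ p / Gamma p = (r ^ p / (r - c) ^ p) * ((r - c) ^ p / Gamma p) := by
      rw [div_mul_div_comm, mul_comm ((r-c)^p) (Gamma p),
        mul_div_mul_right _ _ (rpow_pos_of_pos hrc p).ne']
    rw [mul_assoc, mul_assoc, this, hΓ]; ring
  · simp

lemma lintegral_exp_gammaMeasure {p r c : ℝ} (hp : 0 < p) (hr : 0 < r) (hc : c < r) :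
    ∫⁻ x, ENNReal.ofReal (exp (c * x)) ∂(gammaMeasure p r)
      = ENNReal.ofReal ((r / (r - c)) ^ p) := by
  have hrc : 0 < r - c := by linarith
  rw [gammaMeasure, lintegral_withDensity_eq_lintegral_mul _ ((show Measurable (gammaPDF p r) from (measurable_gammaPDFReal p r).ennreal_ofReal))
    (Measurable.ennreal_ofReal (by fun_prop))]
  have : ∀ x, (gammaPDF p r * fun x => ENNReal.ofReal (exp (c * x))) x
      = ENNReal.ofReal ((r / (r - c)) ^ p) * gammaPDF p (r - c) x := by
    intro x
    simp only [Pi.mul_apply, gammaPDF]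
    rw [← ENNReal.ofReal_mul (gammaPDFReal_nonneg hp hr x),
      gammaPDFReal_mul_exp hr hc x,
      ENNReal.ofReal_mul (by positivity)]
  have h2 : ∫⁻ a, ENNReal.ofReal ((r / (r - c)) ^ p) * gammaPDF p (r - c) a
      = ENNReal.ofReal ((r / (r - c)) ^ p) * ∫⁻ a, gammaPDF p (r - c) a :=
    lintegral_const_mul' _ _ ENNReal.ofReal_ne_top
  rw [lintegral_congr this, h2, lintegral_gammaPDF_eq_one hp hrc, mul_one]

lemma integrable_exp_gammaMeasure {p r c : ℝ} (hp : 0 < p) (hr : 0 < r) (hc : c < r) :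
    Integrable (fun x => exp (c * x)) (gammaMeasure p r) := by
  refine ⟨(Measurable.aestronglyMeasurable (by fun_prop)), ?_⟩
  rw [hasFiniteIntegral_iff_ofReal (ae_of_all _ fun x => (exp_pos _).le)]
  rw [lintegral_exp_gammaMeasure hp hr hc]
  exact ENNReal.ofReal_lt_top

lemma integral_exp_gammaMeasure {p r c : ℝ} (hp : 0 < p) (hr : 0 < r) (hc : c < r) :
    ∫ x, exp (c * x) ∂(gammaMeasure p r) = (r / (r - c)) ^ p := by
  rw [integral_eq_lintegral_of_nonneg_ae (ae_of_all _ fun x => (exp_pos _).le)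
    (Measurable.aestronglyMeasurable (by fun_prop)),
    lintegral_exp_gammaMeasure hp hr hc, ENNReal.toReal_ofReal (rpow_nonneg (div_nonneg hr.le (by linarith)) p)]

lemma aux_exp_lb {t : ℝ} (ht : 0 ≤ t) : 2 - t ≤ (2 + t) * exp (-t) := by
  have key : ∀ x ∈ Set.Ici (0:ℝ), ∀ y ∈ Set.Ici (0:ℝ), x ≤ y →
      (2 + x) * exp (-x) + x ≤ (2 + y) * exp (-y) + y := by
    intro x hx y hy hxy
    have hmono : MonotoneOn (fun t : ℝ => (2 + t) * exp (-t) + t) (Set.Ici 0) := by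
      have hder : ∀ z : ℝ, HasDerivAt (fun t : ℝ => (2 + t) * exp (-t) + t)
          (1 * exp (-z) + (2 + z) * (-exp (-z)) + 1) z := by
        intro z
        have h1 : HasDerivAt (fun t : ℝ => 2 + t) 1 z := (hasDerivAt_id z).const_add 2
        have h2 : HasDerivAt (fun t : ℝ => exp (-t)) (-exp (-z)) z := by
          have h := (Real.hasDerivAt_exp (-z)).comp z (hasDerivAt_neg z)
          simp only [mul_neg, mul_one] at h
          exact h
        exact (h1.mul h2).add (hasDerivAt_id z)
      refine monotoneOn_of_deriv_nonneg (convex_Ici 0) ?_ ?_ ?_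
      · exact Continuous.continuousOn (by continuity)
      · exact fun z _ => ((hder z).differentiableAt).differentiableWithinAt
      · intro z hz
        rw [(hder z).deriv]
        have hz0 : 0 ≤ z := le_of_lt (by simpa using hz)
        have h3 : (1 + z) * exp (-z) ≤ 1 := by
          have h4 : 1 + z ≤ exp z := by linarith [Real.add_one_le_exp z]
          have h5 : (1 + z) * exp (-z) ≤ exp z * exp (-z) :=
            mul_le_mul_of_nonneg_right h4 (exp_pos _).le
          rwa [← exp_add, add_neg_cancel, exp_zero] at h5
        nlinarith [exp_pos (-z)]
    exact hmono hx hy hxy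
  have := key 0 (by simp) t ht ht
  simpa using this

lemma aux_two_log_le {w : ℝ} (hw : 1 ≤ w) : 2 * log w ≤ w - 1 / w := by
  have hw0 : 0 < w := lt_of_lt_of_le one_pos hw
  have h1 : log w ≤ Real.sinh (log w) := Real.self_le_sinh_iff.mpr (log_nonneg hw)
  rw [Real.sinh_eq, exp_log hw0, exp_neg, exp_log hw0] at h1
  have : (w - w⁻¹) / 2 = (w - 1 / w) / 2 := by rw [one_div]
  linarith [h1.trans_eq this]

set_option maxHeartbeats 1000000 in
lemma key_ineq (a b t : ℝ) (ha : 0 < a) (hb : 0 < b) (ht : 0 ≤ t) :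
    a * log (1 + b / a * (1 - exp (-t))) + b * t ^ 2 / (t + (1 + a / (a + b)))
      ≤ b * t := by
  set x : ℝ := 1 - exp (-t) with hxdef
  have hab : 0 < a + b := by linarith
  set r : ℝ := 1 + a / (a + b) with hrdef
  have hr1 : 1 ≤ r := by
    have h0 : 0 ≤ a / (a + b) := by positivity
    simp only [hrdef]; linarith
  have hr0 : 0 < r := lt_of_lt_of_le one_pos hr1
  have htr : 0 < t + r := by linarith
  have h1t : (0:ℝ) < 1 + t := by linarith
  have h2t : (0:ℝ) < 2 + t := by linarith
  have hx0 : 0 ≤ x := by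
    have : exp (-t) ≤ 1 := exp_le_one_iff.mpr (by linarith)
    simp only [hxdef]; linarith
  have hxl : t / (1 + t) ≤ x := by
    have h4 : 1 + t ≤ exp t := by linarith [Real.add_one_le_exp t]
    have h5 : exp (-t) ≤ 1 / (1 + t) := by
      rw [exp_neg, inv_eq_one_div]
      exact one_div_le_one_div_of_le h1t h4
    have h6 : t / (1 + t) = 1 - 1 / (1 + t) := by field_simp; ring
    simp only [hxdef]; linarith
  have hxu : x ≤ 2 * t / (2 + t) := by
    have h5 : (2 - t) / (2 + t) ≤ exp (-t) := by
      rw [div_le_iff₀ h2t]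
      linarith [aux_exp_lb ht, mul_comm (exp (-t)) (2 + t)]
    have h6 : 2 * t / (2 + t) = 1 - (2 - t) / (2 + t) := by field_simp; ring
    simp only [hxdef]; linarith
  set y : ℝ := b / a * x with hydef
  have hy0 : 0 ≤ y := by positivity
  set y0 : ℝ := b / a * (t / (1 + t)) with hy0def
  have hy00 : 0 ≤ y0 := by positivity
  have hyy0 : y0 ≤ y := mul_le_mul_of_nonneg_left hxl (by positivity)
  set w : ℝ := Real.sqrt (1 + y) with hwdef
  set w0 : ℝ := Real.sqrt (1 + y0) with hw0def
  have hw1 : 1 ≤ w := by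
    have h := Real.sqrt_le_sqrt (show (1:ℝ) ≤ 1 + y by linarith)
    rwa [Real.sqrt_one] at h
  have hw01 : 1 ≤ w0 := by
    have h := Real.sqrt_le_sqrt (show (1:ℝ) ≤ 1 + y0 by linarith)
    rwa [Real.sqrt_one] at h
  have hw0pos : 0 < w0 := lt_of_lt_of_le one_pos hw01
  have hwpos : 0 < w := lt_of_lt_of_le one_pos hw1
  have hww0 : w0 ≤ w := Real.sqrt_le_sqrt (by linarith)
  have hwsq : w ^ 2 = 1 + y := Real.sq_sqrt (by linarith)
  have hw0sq : w0 ^ 2 = 1 + y0 := Real.sq_sqrt (by linarith)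
  have step1 : a * log (1 + y) ≤ b * x / w := by
    have hlog : log (1 + y) = 2 * log w := by
      rw [← hwsq, Real.log_pow]; push_cast; ring
    have h2 : 2 * log w ≤ w - 1 / w := aux_two_log_le hw1
    have h3 : w - 1 / w = y / w := by
      field_simp
      nlinarith [hwsq]
    have h4 : a * (y / w) = b * x / w := by
      rw [hydef]; field_simp
    rw [hlog, ← h4]
    exact mul_le_mul_of_nonneg_left (h2.trans_eq h3) ha.le
  have step2 : b * x / w ≤ b * (2 * t / (2 + t)) / w0 := by
    apply div_le_div₀ (by positivity) _ hw0pos hww0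
    exact mul_le_mul_of_nonneg_left hxu hb.le
  have step3 : b * (2 * t / (2 + t)) / w0 ≤ b * t * r / (t + r) := by
    have hsq : (2 * t / (2 + t)) ^ 2 ≤ (t * r / (t + r)) ^ 2 * (1 + y0) := by
      rw [div_pow, div_pow, div_le_iff₀ (by positivity), hy0def, hrdef]
      have hexp : (t * (1 + a/(a+b))) ^ 2 / (t + (1 + a/(a+b))) ^ 2
            * (1 + b / a * (t / (1 + t))) * (2 + t) ^ 2 - (2*t)^2
          = (t^2 * (8*t*a^2*b + 12*t*a*b^2 + 4*t*b^3 + 4*t^2*a^2*b + 9*t^2*a*b^2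
              + 4*t^2*b^3 + t^3*a*b^2 + t^3*b^3))
            / ((a+b)^2 * (t + (1+a/(a+b)))^2 * (a * (1+t))) := by
        field_simp
        ring
      nlinarith [hexp, div_nonneg (by positivity : (0:ℝ) ≤ t^2 * (8*t*a^2*b + 12*t*a*b^2
          + 4*t*b^3 + 4*t^2*a^2*b + 9*t^2*a*b^2 + 4*t^2*b^3 + t^3*a*b^2 + t^3*b^3))
        (by positivity : (0:ℝ) ≤ (a+b)^2 * (t + (1+a/(a+b)))^2 * (a * (1+t)))]
    have hle : 2 * t / (2 + t) ≤ t * r / (t + r) * w0 := by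
      have h7 : (2 * t / (2 + t)) ^ 2 ≤ (t * r / (t + r) * w0) ^ 2 := by
        rw [mul_pow, hw0sq]; exact hsq
      have h8 := Real.sqrt_le_sqrt h7
      rwa [Real.sqrt_sq (by positivity), Real.sqrt_sq (by positivity)] at h8
    calc b * (2 * t / (2 + t)) / w0 ≤ b * (t * r / (t + r) * w0) / w0 :=
          (div_le_div_iff_of_pos_right hw0pos).mpr (mul_le_mul_of_nonneg_left hle hb.le)
      _ = b * t * r / (t + r) := by field_simp
  have hfinal : b * t * r / (t + r) = b * t - b * t ^ 2 / (t + r) := by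
    field_simp
    ring
  have hchain := (step1.trans step2).trans step3
  rw [hfinal] at hchain
  linarith

/-- The chi-square distribution with `d` degrees of freedom, as the Gamma(d/2, 1/2)
distribution. -/
noncomputable def chiSqMeasure (d : ℕ) : Measure ℝ := gammaMeasure ((d : ℝ) / 2) (1 / 2)

set_option maxHeartbeats 2000000 in
theorem stmt15 {Ω : Type*} [MeasurableSpace Ω] {μ : Measure Ω} [IsProbabilityMeasure μ]
    (m n : ℕ) (hm : 1 < m) (hmn : m < n - 1)
    (A B : Ω → ℝ) (hA : Measure.map A μ = chiSqMeasure (m - 1))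
    (hB : Measure.map B μ = chiSqMeasure (n - m + 1)) (hAB : IndepFun A B μ)
    (t : ℝ) (ht : 0 ≤ t) :
    μ {ω | (1 + A ω / B ω) * ((n : ℝ) - m + 1) / n > Real.exp t}
      ≤ ENNReal.ofReal (Real.exp (-(((n : ℝ) - m + 1) / 2) *
          t ^ 2 / (t + 1 + ((m : ℝ) - 1) / n))) := by
  -- basic numeric facts
  have hmn' : m + 2 ≤ n := by omega
  have hmcast : (2:ℝ) ≤ (m:ℝ) := by exact_mod_cast hm
  have hncast : (m:ℝ) + 2 ≤ (n:ℝ) := by exact_mod_cast hmn'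
  set aR : ℝ := (m:ℝ) - 1 with haRdef
  set bR : ℝ := (n:ℝ) - m + 1 with hbRdef
  have haR0 : 0 < aR := by simp only [haRdef]; linarith
  have hbR0 : 0 < bR := by simp only [hbRdef]; linarith
  have hn0 : (0:ℝ) < n := by linarith
  have hnab : (n:ℝ) = aR + bR := by simp only [haRdef, hbRdef]; ring
  have hbRn : bR < (n:ℝ) := by simp only [hbRdef]; linarith
  -- rewrite the mapped measures as gamma measures
  have hcastA : ((m - 1 : ℕ) : ℝ) = aR := by
    simp only [haRdef]; push_cast [Nat.cast_sub hm.le]; ring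
  have hcastB : ((n - m + 1 : ℕ) : ℝ) = bR := by
    have hmn'' : m ≤ n := by omega
    simp only [hbRdef]; push_cast [Nat.cast_sub hmn'']; ring
  have hAG : Measure.map A μ = gammaMeasure (aR / 2) (1 / 2) := by
    rw [hA, chiSqMeasure, hcastA]
  have hBG : Measure.map B μ = gammaMeasure (bR / 2) (1 / 2) := by
    rw [hB, chiSqMeasure, hcastB]
  have haR2 : 0 < aR / 2 := by linarith
  have hbR2 : 0 < bR / 2 := by linarith
  -- A and B are a.e. measurable
  have hmeasA : AEMeasurable A μ := by
    by_contra h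
    have h0 := Measure.map_of_not_aemeasurable h
    rw [hAG] at h0
    have : IsProbabilityMeasure (gammaMeasure (aR/2) (1/2)) :=
      isProbabilityMeasure_gammaMeasure haR2 (by norm_num)
    have h1 := this.measure_univ
    rw [h0] at h1
    simp at h1
  have hmeasB : AEMeasurable B μ := by
    by_contra h
    have h0 := Measure.map_of_not_aemeasurable h
    rw [hBG] at h0
    have : IsProbabilityMeasure (gammaMeasure (bR/2) (1/2)) :=
      isProbabilityMeasure_gammaMeasure hbR2 (by norm_num)
    have h1 := this.measure_univ
    rw [h0] at h1
    simp at h1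
  -- null sets
  have hgammaIio : ∀ p r : ℝ, gammaMeasure p r (Set.Iio 0) = 0 := by
    intro p r
    rw [gammaMeasure, withDensity_apply _ measurableSet_Iio]
    exact lintegral_gammaPDF_of_nonpos le_rfl
  have hAneg : μ (A ⁻¹' Set.Iio 0) = 0 := by
    rw [← Measure.map_apply_of_aemeasurable hmeasA measurableSet_Iio, hAG, hgammaIio]
  have hBnonpos : μ (B ⁻¹' Set.Iic 0) = 0 := by
    rw [← Measure.map_apply_of_aemeasurable hmeasB measurableSet_Iic, hBG]
    have h1 : (Set.Iic (0:ℝ)) ⊆ Set.Iio 0 ∪ {0} := by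
      intro x hx
      have hx' : x ≤ 0 := hx
      rcases lt_or_eq_of_le hx' with h | h
      · exact Or.inl h
      · exact Or.inr (by simp [h])
    refine le_antisymm ?_ zero_le
    refine le_trans (measure_mono h1) ?_
    refine le_trans (measure_union_le _ _) ?_
    rw [hgammaIio]
    have h2 : gammaMeasure (bR/2) (1/2) ({0} : Set ℝ) = 0 := by
      exact (withDensity_absolutelyContinuous volume _) (by simp)
    rw [h2]; simp
  -- the Chernoff parameters
  have hexpt1 : (1:ℝ) ≤ exp t := one_le_exp ht
  set s : ℝ := (exp t * n - bR) / bR with hsdef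
  have hsnum : 0 < exp t * n - bR := by nlinarith
  have hs0 : 0 < s := div_pos hsnum hbR0
  set lam : ℝ := (exp t - 1) / (2 * s) with hlamdef
  have hlam0 : 0 ≤ lam := div_nonneg (by linarith) (by linarith)
  have hsgt : exp t - 1 < s := by
    rw [hsdef, lt_div_iff₀ hbR0]; nlinarith
  have hlamhalf : lam < 1 / 2 := by
    rw [hlamdef, div_lt_iff₀ (by linarith)]; linarith
  have hlams : lam * s = (exp t - 1) / 2 := by
    rw [hlamdef]; field_simp
  -- event inclusion
  set Y : Ω → ℝ := fun ω => -(s * B ω) with hYdef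
  set X : Ω → ℝ := A + Y with hXdef
  have hincl : {ω | (1 + A ω / B ω) * ((n : ℝ) - m + 1) / n > Real.exp t}
      ⊆ {ω | (0:ℝ) ≤ X ω} ∪ (A ⁻¹' Set.Iio 0 ∪ B ⁻¹' Set.Iic 0) := by
    intro ω hω
    by_cases hAω : 0 ≤ A ω
    · by_cases hBω : 0 < B ω
      · left
        have hev : exp t < (1 + A ω / B ω) * bR / n := hω
        have h4 : exp t * n < (1 + A ω / B ω) * bR := by
          rw [lt_div_iff₀ hn0] at hev; linarith
        have h5 : s < A ω / B ω := by
          rw [hsdef, div_lt_iff₀ hbR0]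
          have h6 : (A ω / B ω) * bR = (1 + A ω / B ω) * bR - bR := by ring
          rw [h6]; linarith
        have h7 : s * B ω < A ω := by
          rw [lt_div_iff₀ hBω] at h5; exact h5
        show (0:ℝ) ≤ A ω + -(s * B ω)
        linarith
      · right; right; exact le_of_not_gt hBω
    · right; left; exact lt_of_not_ge hAω
  -- integrability
  have hmexpA : Integrable (fun ω => exp (lam * A ω)) μ := by
    have h1 : Integrable (fun x => exp (lam * x)) (Measure.map A μ) := by
      rw [hAG]; exact integrable_exp_gammaMeasure haR2 (by norm_num) (by linarith)
    exact (integrable_map_measure (Measurable.aestronglyMeasurable (by fun_prop)) hmeasA).mp h1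
  have hmexpB : Integrable (fun ω => exp (-(lam * s) * B ω)) μ := by
    have h1 : Integrable (fun x => exp (-(lam * s) * x)) (Measure.map B μ) := by
      rw [hBG]
      refine integrable_exp_gammaMeasure hbR2 (by norm_num) ?_
      have : 0 ≤ lam * s := mul_nonneg hlam0 hs0.le
      linarith
    exact (integrable_map_measure (Measurable.aestronglyMeasurable (by fun_prop)) hmeasB).mp h1
  have hindep2 : IndepFun (fun ω => exp (lam * A ω)) (fun ω => exp (-(lam * s) * B ω)) μ :=
    hAB.comp (by fun_prop : Measurable fun x : ℝ => exp (lam * x))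
      (by fun_prop : Measurable fun x : ℝ => exp (-(lam * s) * x))
  have hXeq : (fun ω => exp (lam * X ω))
      = fun ω => exp (lam * A ω) * exp (-(lam * s) * B ω) := by
    funext ω
    rw [← exp_add]
    congr 1
    show lam * (A ω + -(s * B ω)) = _
    ring
  have hintX : Integrable (fun ω => exp (lam * X ω)) μ := by
    rw [hXeq]; exact hindep2.integrable_mul hmexpA hmexpB
  -- Chernoff bound
  have hcher := measure_ge_le_exp_mul_mgf (μ := μ) (X := X) 0 hlam0 hintX
  -- compute the mgf
  have hmgfA : mgf A μ lam = ((1:ℝ)/2 / (1/2 - lam)) ^ (aR / 2) := by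
    have h0 : mgf A μ lam = ∫ x, exp (lam * x) ∂(Measure.map A μ) :=
      (integral_map hmeasA (Measurable.aestronglyMeasurable
        (by fun_prop : Measurable fun x : ℝ => exp (lam * x)))).symm
    rw [h0, hAG, integral_exp_gammaMeasure haR2 (by norm_num) (by linarith)]
  have hmgfY : mgf Y μ lam = ((1:ℝ)/2 / (1/2 + lam * s)) ^ (bR / 2) := by
    have h1 : mgf Y μ lam = ∫ ω, exp (-(lam * s) * B ω) ∂μ := by
      rw [mgf]
      congr 1
      funext ω
      show exp (lam * -(s * B ω)) = _
      congr 1; ring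
    have h0 : (∫ ω, exp (-(lam * s) * B ω) ∂μ) = ∫ x, exp (-(lam * s) * x) ∂(Measure.map B μ) :=
      (integral_map hmeasB (Measurable.aestronglyMeasurable
        (by fun_prop : Measurable fun x : ℝ => exp (-(lam * s) * x)))).symm
    rw [h1, h0, hBG, integral_exp_gammaMeasure hbR2 (by norm_num)
        (by nlinarith [mul_nonneg hlam0 hs0.le])]
    norm_num
  have hmgfX : mgf X μ lam = ((1:ℝ)/2 / (1/2 - lam)) ^ (aR / 2)
      * ((1:ℝ)/2 / (1/2 + lam * s)) ^ (bR / 2) := by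
    have hindepAY : IndepFun A Y μ := by
      have h2 := hAB.comp measurable_id (show Measurable fun x : ℝ => -(s * x) by fun_prop)
      simpa [hYdef, Function.comp_def] using h2
    rw [hXdef, hindepAY.mgf_add' hmeasA.aestronglyMeasurable
        ((hmeasB.const_mul s).neg.aestronglyMeasurable), hmgfA, hmgfY]
  -- the explicit values
  have hhalf : (0:ℝ) < 1/2 - lam := by linarith
  have hexpneg : exp (-t) ≤ 1 := exp_le_one_iff.mpr (by linarith)
  have h1 : ((1:ℝ)/2) / (1/2 - lam) = 1 + bR / aR * (1 - exp (-t)) := by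
    rw [exp_neg, hlamdef, hsdef, hnab]
    have he : exp t ≠ 0 := (exp_pos t).ne'
    have hd : (0:ℝ) < exp t * (aR + bR) - bR := by rw [hnab] at hsnum; linarith
    have hden : -rexp t + rexp t * (m:ℝ) ≠ 0 := by
      have : 0 < rexp t * ((m:ℝ) - 1) := by positivity
      intro hcon; nlinarith
    have hq : (-rexp t + rexp t * (m:ℝ)) * (-rexp t + rexp t * (m:ℝ))⁻¹ = 1 :=
      mul_inv_cancel₀ hden
    field_simp [haR0.ne', hbR0.ne', hd.ne', hden]
    linear_combination ((m:ℝ) - (n:ℝ) - 1 + rexp t * (n:ℝ)) * hq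
  have h2 : ((1:ℝ)/2) / (1/2 + lam * s) = exp (-t) := by
    rw [exp_neg, hlams]
    have he : exp t ≠ 0 := (exp_pos t).ne'
    field_simp
    ring
  have hy1 : (0:ℝ) < 1 + bR / aR * (1 - exp (-t)) := by
    have : 0 ≤ bR / aR * (1 - exp (-t)) := by
      apply mul_nonneg (by positivity); linarith
    linarith
  have hV : mgf X μ lam ≤ exp (-(bR / 2) * t ^ 2 / (t + 1 + aR / (n:ℝ))) := by
    rw [hmgfX, h1, h2, Real.rpow_def_of_pos hy1, Real.rpow_def_of_pos (exp_pos _), log_exp,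
      ← exp_add, exp_le_exp]
    have hkey := key_ineq aR bR t haR0 hbR0 ht
    rw [← hnab] at hkey
    have htden : (0:ℝ) < t + (1 + aR / (n:ℝ)) := by positivity
    have e1 : -(bR / 2) * t ^ 2 / (t + 1 + aR / (n:ℝ))
        = -(bR * t ^ 2 / (t + (1 + aR / (n:ℝ)))) / 2 := by
      rw [show t + 1 + aR / (n:ℝ) = t + (1 + aR / (n:ℝ)) by ring]
      ring
    rw [e1]
    linarith
  -- assemble
  have hfin : (μ {ω | (0:ℝ) ≤ X ω}).toReal
      ≤ exp (-(bR / 2) * t ^ 2 / (t + 1 + aR / (n:ℝ))) := by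
    have h3 : exp (-lam * 0) * mgf X μ lam = mgf X μ lam := by simp
    calc (μ {ω | (0:ℝ) ≤ X ω}).toReal ≤ exp (-lam * 0) * mgf X μ lam := hcher
      _ = mgf X μ lam := h3
      _ ≤ _ := hV
  calc μ {ω | (1 + A ω / B ω) * ((n : ℝ) - m + 1) / n > Real.exp t}
      ≤ μ ({ω | (0:ℝ) ≤ X ω} ∪ (A ⁻¹' Set.Iio 0 ∪ B ⁻¹' Set.Iic 0)) := measure_mono hincl
    _ ≤ μ {ω | (0:ℝ) ≤ X ω} + μ (A ⁻¹' Set.Iio 0 ∪ B ⁻¹' Set.Iic 0) := measure_union_le _ _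
    _ ≤ μ {ω | (0:ℝ) ≤ X ω} + (μ (A ⁻¹' Set.Iio 0) + μ (B ⁻¹' Set.Iic 0)) :=
        add_le_add le_rfl (measure_union_le _ _)
    _ = μ {ω | (0:ℝ) ≤ X ω} := by rw [hAneg, hBnonpos]; simp
    _ ≤ ENNReal.ofReal (Real.exp (-(((n : ℝ) - m + 1) / 2) * t ^ 2
          / (t + 1 + ((m : ℝ) - 1) / n))) := by
        exact (ENNReal.le_ofReal_iff_toReal_le (measure_ne_top μ _) (exp_pos _).le).mpr hfin
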